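/- Let k be a commutative ring, A a k-algebra regarded as a k-category with one object, I = ⟨Q | R⟩ a small category presented by a quiver Q with relations R, and Δ(A) : I → k-Cat the diagonal functor sending every object to A and every morphism to the identity functor. Then the Grothendieck construction Gr(Δ(A)) is isomorphic as a k-category to AQ/⟨R⟩_A, the quiver algebra of Q over A modulo the ideal generated by the elements g − h for (g,h) ∈ R. -/

import Mathlib

open CategoryTheory Quiver Finsupp

/-- Convolution composition in the quiver algebra `AQ`. -/
noncomputable def pcomp {V : Type} [Quiver.{1} V] {A : Type*} [Ring A] {i j l : V}
    (f : Path i j →₀ A) (g : Path j l →₀ A) : Path i l →₀ A :=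
  f.sum fun p fp => g.sum fun q gq => Finsupp.single (p.comp q) (gq * fp)

/-- The relation `R` viewed as a `HomRel` on the free category `ℙQ = Paths V`. -/
def pathsRel {V : Type} [Quiver.{1} V]
    (R : ∀ ⦃i j : V⦄, Path i j → Path i j → Prop) : HomRel (Paths V) :=
  fun {i j} p q => R p q

/-- The category `I = ⟨Q ∣ R⟩` presented by the quiver `V` with relations `R`:
the quotient of the free category on `V` by the congruence generated by `R`. -/
def PresCat {V : Type} [Quiver.{1} V]
    (R : ∀ ⦃i j : V⦄, Path i j → Path i j → Prop) : Type :=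
  CategoryTheory.Quotient (pathsRel R)

noncomputable instance {V : Type} [Quiver.{1} V]
    (R : ∀ ⦃i j : V⦄, Path i j → Path i j → Prop) : Category (PresCat R) :=
  inferInstanceAs (Category (CategoryTheory.Quotient (pathsRel R)))

/-- The object of `I = ⟨Q ∣ R⟩` corresponding to a vertex `i`. -/
def presObj {V : Type} [Quiver.{1} V]
    (R : ∀ ⦃i j : V⦄, Path i j → Path i j → Prop) (i : V) : PresCat R :=
  ⟨i⟩

/-- Composition in the Grothendieck construction `Gr(Δ(A))` of the diagonal functor:
hom-modules are `⨁_{a ∈ I(i,j)} A` and `(g ∘ f)_c = ∑_{c = b∘a} g_b · f_a`. -/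
noncomputable def gconv {C : Type*} [Category C] {A : Type*} [Ring A] {X Y Z : C}
    (f : (X ⟶ Y) →₀ A) (g : (Y ⟶ Z) →₀ A) : (X ⟶ Z) →₀ A :=
  f.sum fun a fa => g.sum fun b gb => Finsupp.single (a ≫ b) (gb * fa)

/-- The component at `(i,j)` of the two-sided ideal `⟨R⟩_A` of `AQ` generated by the
elements `g - h` with `(g,h) ∈ R`. -/
noncomputable def IdA {V : Type} [Quiver.{1} V] (A : Type*) [Ring A]
    (R : ∀ ⦃i j : V⦄, Path i j → Path i j → Prop) (i j : V) :
    Submodule A (Path i j →₀ A) :=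
  Submodule.span A
    {f : Path i j →₀ A | ∃ (i' j' : V) (x y : A)
      (α : Path i i') (p q : Path i' j') (β : Path j' j), R p q ∧
      f = pcomp (Finsupp.single α x)
            (pcomp (Finsupp.single p (1 : A) - Finsupp.single q (1 : A))
              (Finsupp.single β y))}

/-! The quotient functor `ℙQ ⥤ ⟨Q ∣ R⟩` induces on free `A`-modules a surjection
`AQ(i, j) → ⨁_{I(i,j)} A`, and, being a functor, it turns the path convolution `pcomp` into the
composition `gconv` of `Gr(Δ(A))`. Its kernel is spanned by the differences `a·c - b·c` of paths
with the same image, i.e. of paths related by the equivalence closure of the compositional closure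
of `R`: by induction along that closure these lie in `⟨R⟩_A`, and conversely every generator of
`⟨R⟩_A` is such a difference. So the induced map `AQ/⟨R⟩_A → Gr(Δ(A))` is an isomorphism. -/

namespace Finsupp

variable {R M X Y : Type*} [Ring R] [AddCommGroup M] [Module R M]

lemma sub_mapDomain_mem_span_single_sub_single {f : X → Y} {g : X → X} (hg : f ∘ g = f)
    (v : X →₀ M) :
    v - mapDomain g v ∈
      Submodule.span R {w | ∃ a b c, f a = f b ∧ w = single a c - single b c} := by
  induction v using Finsupp.induction_linear with
  | zero => simp
  | add v w hv hw =>
    rw [mapDomain_add, add_sub_add_comm]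
    exact add_mem hv hw
  | single a c =>
    rw [mapDomain_single]
    exact Submodule.subset_span ⟨a, g a, c, (congrFun hg a).symm, rfl⟩

theorem ker_lmapDomain_eq_span (f : X → Y) :
    LinearMap.ker (lmapDomain M R f) =
      Submodule.span R {w | ∃ a b c, f a = f b ∧ w = single a c - single b c} := by
  refine le_antisymm (fun v hv => ?_) (Submodule.span_le.mpr ?_)
  · rcases isEmpty_or_nonempty X with hX | hX
    · simp [Subsingleton.elim v 0]
    -- `invFun f ∘ f` keeps every point in its fibre, and kills `v` since `mapDomain f v = 0`.
    have hfib : f ∘ (Function.invFun f ∘ f) = f :=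
      funext fun a => Function.invFun_eq ⟨a, rfl⟩
    have hv0 : mapDomain (Function.invFun f ∘ f) v = 0 := by
      rw [mapDomain_comp, ← lmapDomain_apply M R f, LinearMap.mem_ker.mp hv, mapDomain_zero]
    simpa [hv0] using sub_mapDomain_mem_span_single_sub_single (R := R) hfib v
  · rintro _ ⟨a, b, c, hab, rfl⟩
    simp [mapDomain_sub, hab]

lemma single_sub_single_mem_of_eqvGen {r : X → X → Prop} {N : Submodule R (X →₀ M)}
    (hr : ∀ a b c, r a b → single a c - single b c ∈ N) {a b : X}
    (hab : Relation.EqvGen r a b) (c : M) : single a c - single b c ∈ N := by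
  induction hab with
  | rel a b h => exact hr a b c h
  | refl a => simp
  | symm a b _ ih => simpa using neg_mem ih
  | trans a b d _ _ ih₁ ih₂ => simpa using add_mem ih₁ ih₂

end Finsupp

lemma gconv_single_single {A C : Type*} [Ring A] [Category C] {X Y Z : C}
    (a : X ⟶ Y) (b : Y ⟶ Z) (x y : A) :
    gconv (single a x) (single b y) = single (a ≫ b) (y * x) := by
  simp [gconv]

lemma gconv_sub_left {A C : Type*} [Ring A] [Category C] {X Y Z : C}
    (f f' : (X ⟶ Y) →₀ A) (g : (Y ⟶ Z) →₀ A) :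
    gconv (f - f') g = gconv f g - gconv f' g := by
  unfold gconv
  rw [sum_sub_index fun _ _ _ => by simp [mul_sub, single_sub, sum_sub]]

lemma gconv_sub_right {A C : Type*} [Ring A] [Category C] {X Y Z : C}
    (f : (X ⟶ Y) →₀ A) (g g' : (Y ⟶ Z) →₀ A) :
    gconv f (g - g') = gconv f g - gconv f g' := by
  unfold gconv
  rw [← sum_sub]
  exact sum_congr fun _ _ => sum_sub_index fun _ _ _ => by simp [sub_mul, single_sub]

theorem mapDomain_gconv {A C D : Type*} [Ring A] [Category C] [Category D] (F : C ⥤ D)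
    {X Y Z : C} (f : (X ⟶ Y) →₀ A) (g : (Y ⟶ Z) →₀ A) :
    mapDomain F.map (gconv f g) = gconv (mapDomain F.map f) (mapDomain F.map g) := by
  unfold gconv
  rw [sum_mapDomain_index (by simp) (by simp [mul_add, sum_add])]
  simp only [← mapDomain.addMonoidHom_apply, map_finsuppSum]
  refine sum_congr fun a _ => ?_
  rw [mapDomain.addMonoidHom_apply, sum_mapDomain_index (by simp) (by simp [add_mul])]
  simp only [mapDomain.addMonoidHom_apply, mapDomain_single, F.map_comp]

section Presentation

variable {V : Type} [Quiver.{1} V] {A : Type*} [Ring A]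
  (R : ∀ ⦃i j : V⦄, Path i j → Path i j → Prop)

lemma pcomp_sub_left {i j l : V} (f f' : Path i j →₀ A) (g : Path j l →₀ A) :
    pcomp (f - f') g = pcomp f g - pcomp f' g :=
  gconv_sub_left (C := Paths V) f f' g

lemma pcomp_sub_right {i j l : V} (f : Path i j →₀ A) (g g' : Path j l →₀ A) :
    pcomp f (g - g') = pcomp f g - pcomp f g' :=
  gconv_sub_right (C := Paths V) f g g'

lemma pcomp_single_single {i j l : V} (a : Path i j) (b : Path j l) (x y : A) :
    pcomp (single a x) (single b y) = single (a.comp b) (y * x) :=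
  gconv_single_single (C := Paths V) a b x y

lemma pcomp_single_sub_single {i i' j' j : V} (α : Path i i') (p q : Path i' j')
    (β : Path j' j) (x y : A) :
    pcomp (single α x) (pcomp (single p 1 - single q 1) (single β y)) =
      single (α.comp (p.comp β)) (y * x) - single (α.comp (q.comp β)) (y * x) := by
  simp only [pcomp_sub_left, pcomp_sub_right, pcomp_single_single, mul_one]

def presFunctor : Paths V ⥤ PresCat R := Quotient.functor (pathsRel R)

theorem IdA_eq_ker_lmapDomain (i j : V) :
    IdA A R i j = LinearMap.ker (lmapDomain A A ((presFunctor R).map : Path i j → _)) := by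
  rw [ker_lmapDomain_eq_span]
  refine le_antisymm (Submodule.span_le.mpr ?_) (Submodule.span_le.mpr ?_)
  · rintro _ ⟨i', j', x, y, α, p, q, β, hpq, rfl⟩
    refine Submodule.subset_span ⟨_, _, y * x, ?_, pcomp_single_sub_single α p q β x y⟩
    exact Quot.sound (HomRel.CompClosure.intro (r := pathsRel R) _ _ α p q β hpq)
  · rintro _ ⟨a, b, c, hab, rfl⟩
    refine single_sub_single_mem_of_eqvGen ?_
      ((Quotient.functor_homRel_eq_compClosure_eqvGen (pathsRel R) a b).mp hab) c
    rintro _ _ c ⟨i', j', α, p, q, β, hpq⟩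
    have h := pcomp_single_sub_single α p q β (1 : A) c
    rw [mul_one] at h
    exact Submodule.subset_span ⟨_, _, 1, c, α, p, q, β, hpq, h.symm⟩

noncomputable def quotIdAEquiv (i j : V) :
    ((Path i j →₀ A) ⧸ IdA A R i j) ≃ₗ[A] ((presObj R i ⟶ presObj R j) →₀ A) :=
  (Submodule.quotEquivOfEq _ _ (IdA_eq_ker_lmapDomain R i j)).trans
    ((lmapDomain A A (presFunctor R).map).quotKerEquivOfSurjective
      (mapDomain_surjective Quot.mk_surjective))

lemma quotIdAEquiv_mk {i j : V} (f : Path i j →₀ A) :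
    quotIdAEquiv R i j (Submodule.Quotient.mk f) = mapDomain (presFunctor R).map f := rfl

end Presentation

theorem stmt10_general (A : Type*) [Ring A]
    (V : Type) [Quiver.{1} V] (R : ∀ ⦃i j : V⦄, Path i j → Path i j → Prop) :
    ∃ e : ∀ i j : V,
        ((Path i j →₀ A) ⧸ IdA A R i j) ≃ₗ[A] ((presObj R i ⟶ presObj R j) →₀ A),
      (∀ i : V, e i i (Submodule.Quotient.mk (Finsupp.single Path.nil (1 : A)))
          = Finsupp.single (𝟙 (presObj R i)) (1 : A)) ∧
      (∀ (i j l : V) (f : Path i j →₀ A) (g : Path j l →₀ A),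
        e i l (Submodule.Quotient.mk (pcomp f g))
          = gconv (e i j (Submodule.Quotient.mk f))
              (e j l (Submodule.Quotient.mk g))) := by
  refine ⟨quotIdAEquiv R, fun i => ?_, fun i j l f g => ?_⟩
  · rw [quotIdAEquiv_mk, Finsupp.mapDomain_single]
    exact congrArg (Finsupp.single · 1) ((presFunctor R).map_id i)
  · exact mapDomain_gconv (presFunctor R) f g

/-- For a `k`-algebra `A` and a small category `I = ⟨Q ∣ R⟩`,
the Grothendieck construction `Gr(Δ(A))` of the diagonal functor is isomorphic
to `AQ/⟨R⟩_A`: there are linear equivalences on hom-modules which are bijective on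
objects (both sides have objects `Q₀`) preserving identities and composition. -/
theorem stmt10 (k : Type*) [CommRing k] (A : Type*) [Ring A] [Algebra k A]
    (V : Type) [Quiver.{1} V] (R : ∀ ⦃i j : V⦄, Path i j → Path i j → Prop) :
    ∃ e : ∀ i j : V,
        ((Path i j →₀ A) ⧸ IdA A R i j) ≃ₗ[A] ((presObj R i ⟶ presObj R j) →₀ A),
      (∀ i : V, e i i (Submodule.Quotient.mk (Finsupp.single Path.nil (1 : A)))
          = Finsupp.single (𝟙 (presObj R i)) (1 : A)) ∧
      (∀ (i j l : V) (f : Path i j →₀ A) (g : Path j l →₀ A),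
        e i l (Submodule.Quotient.mk (pcomp f g))
          = gconv (e i j (Submodule.Quotient.mk f))
              (e j l (Submodule.Quotient.mk g))) :=
  stmt10_general A V R
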